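/- Let ε, σ, L, D, D̃ be positive reals and set C₁ := σ²/D̃, C₂ := 8σ/√D̃, C₃ := 6σ√D̃. Let N̄ be a positive integer satisfying N̄ ≥ max{ (D·C₂ + L·C₃)²/ε² + 32·L·D/ε , C₁/L² }, and let m := ⌈ min{ N̄, max{ 1, (σ/L)·√(N̄/D̃) } } ⌉. Then 8·L·D·m/N̄ + 6σ²/m ≤ ε. In particular, since the number of iterations N := ⌈N̄/m⌉ satisfies N ≥ N̄/(2m), also 4·L·D/N + 6σ²/m ≤ ε. -/

import Mathlib

/-!
With `t := σ / L * √(N̄ / D̃)`, the condition `N̄ ≥ C₁ / L²` says `t ≤ N̄`, so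
`m = ⌈max 1 t⌉` lies in `[t, t + 2]`. Hence
`8LDm/N̄ + 6σ²/m ≤ 8LD(t + 2)/N̄ + 6σ²/t = (D C₂ + L C₃)/√N̄ + 16LD/N̄`,
and the condition `N̄ ≥ (D C₂ + L C₃)²/ε² + 32LD/ε` makes the right-hand side at most `ε`
by AM-GM. Finally `N ≥ N̄/m ≥ N̄/(2m)` gives `4LD/N ≤ 8LDm/N̄`.
-/

open Real

theorem add_div_sqrt_add_div_le {A B ε n : ℝ} (hε : 0 < ε) (hn : 0 < n)
    (h : A ^ 2 / ε ^ 2 + 2 * B / ε ≤ n) : A / √n + B / n ≤ ε := by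
  have hsn : √n ^ 2 = n := sq_sqrt hn.le
  have hεn : A ^ 2 + 2 * B * ε ≤ ε ^ 2 * n := by
    calc A ^ 2 + 2 * B * ε = (A ^ 2 / ε ^ 2 + 2 * B / ε) * ε ^ 2 := by field_simp
      _ ≤ n * ε ^ 2 := by gcongr
      _ = ε ^ 2 * n := mul_comm _ _
  have amgm : 2 * ε * (A * √n) ≤ A ^ 2 + ε ^ 2 * n := by
    nlinarith [sq_nonneg (A - ε * √n)]
  have key : A * √n + B ≤ ε * n := by nlinarith
  calc A / √n + B / n = (A * √n + B) / n := by
        field_simp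
        linear_combination (-A) * hsn
    _ ≤ ε := (div_le_iff₀ hn).mpr key

theorem ceil_max_one_le_add_two {t : ℝ} (ht : 0 ≤ t) : (⌈max 1 t⌉₊ : ℝ) ≤ t + 2 := by
  have := Nat.ceil_lt_add_one (zero_le_one.trans (le_max_left 1 t))
  have : max 1 t ≤ t + 1 := max_le (by linarith) (by linarith)
  linarith

theorem div_mul_sqrt_div_le {σ L Dt n : ℝ} (hL : 0 < L) (hDt : 0 < Dt) (hn : 0 ≤ n)
    (h : σ ^ 2 / Dt / L ^ 2 ≤ n) : σ / L * √(n / Dt) ≤ n := by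
  calc σ / L * √(n / Dt) ≤ |σ / L| * √(n / Dt) := by gcongr; exact le_abs_self _
    _ = √(σ ^ 2 / Dt / L ^ 2 * n) := by
        rw [← sqrt_sq_eq_abs, ← sqrt_mul (sq_nonneg _)]
        congr 1; field_simp
    _ ≤ √(n * n) := by gcongr
    _ = n := sqrt_mul_self hn

theorem div_two_mul_le_ceil_div {x y : ℝ} (hx : 0 ≤ x) (hy : 0 ≤ y) :
    x / (2 * y) ≤ ⌈x / y⌉₊ := by
  calc x / (2 * y) = x / y / 2 := by rw [div_div, mul_comm]
    _ ≤ x / y := half_le_self (by positivity)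
    _ ≤ _ := Nat.le_ceil _

theorem stmt_1 (ε σ L D Dtilde : ℝ) (hε : 0 < ε) (hσ : 0 < σ) (hL : 0 < L) (hD : 0 < D)
    (hDtilde : 0 < Dtilde) (C₁ C₂ C₃ : ℝ)
    (hC₁ : C₁ = σ ^ 2 / Dtilde) (hC₂ : C₂ = 8 * σ / Real.sqrt Dtilde) (hC₃ : C₃ = 6 * σ * Real.sqrt Dtilde)
    (Nbar : ℕ) (hNbarpos : 0 < Nbar)
    (hNbar : (Nbar : ℝ) ≥ max ((D * C₂ + L * C₃) ^ 2 / ε ^ 2 + 32 * L * D / ε) (C₁ / L ^ 2))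
    (m : ℕ) (hm : m = ⌈min (Nbar : ℝ) (max 1 (σ / L * Real.sqrt ((Nbar : ℝ) / Dtilde)))⌉₊)
    (N : ℕ) (hN : N = ⌈(Nbar : ℝ) / (m : ℝ)⌉₊) :
    8 * L * D * (m : ℝ) / (Nbar : ℝ) + 6 * σ ^ 2 / (m : ℝ) ≤ ε ∧
      (N : ℝ) ≥ (Nbar : ℝ) / (2 * (m : ℝ)) ∧
      4 * L * D / (N : ℝ) + 6 * σ ^ 2 / (m : ℝ) ≤ ε := by
  set t := σ / L * √(Nbar / Dtilde) with ht
  have hN0 : (0 : ℝ) < Nbar := by exact_mod_cast hNbarpos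
  have ht0 : 0 < t := by positivity
  have htN : t ≤ Nbar := div_mul_sqrt_div_le hL hDtilde hN0.le (hC₁ ▸ (le_max_right _ _).trans hNbar)
  rw [min_eq_right (max_le (by exact_mod_cast hNbarpos) htN)] at hm
  have htm : t ≤ m := hm ▸ (le_max_right 1 t).trans (Nat.le_ceil _)
  have hmt : (m : ℝ) ≤ t + 2 := hm ▸ ceil_max_one_le_add_two ht0.le
  have hm0 : (0 : ℝ) < m := ht0.trans_le htm
  have hrate : 8 * L * D * m / Nbar + 6 * σ ^ 2 / m ≤ ε :=
    calc 8 * L * D * m / Nbar + 6 * σ ^ 2 / m = 8 * L * D / Nbar * m + 6 * σ ^ 2 / m := by ring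
      _ ≤ 8 * L * D / Nbar * (t + 2) + 6 * σ ^ 2 / t := by gcongr
      _ = (D * C₂ + L * C₃) / √Nbar + 16 * L * D / Nbar := by
        have hNs := sq_sqrt hN0.le
        rw [ht, hC₂, hC₃, sqrt_div hN0.le]
        field_simp
        linear_combination 8 * D * σ * hNs
      _ ≤ ε := add_div_sqrt_add_div_le hε hN0 (((le_max_left _ _).trans hNbar).trans_eq' (by ring))
  have hNge : (N : ℝ) ≥ Nbar / (2 * m) := hN ▸ div_two_mul_le_ceil_div hN0.le hm0.le
  refine ⟨hrate, hNge, ?_⟩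
  calc 4 * L * D / N + 6 * σ ^ 2 / m ≤ 4 * L * D / (Nbar / (2 * m)) + 6 * σ ^ 2 / m := by
        gcongr
    _ = 8 * L * D * m / Nbar + 6 * σ ^ 2 / m := by field_simp; ring
    _ ≤ ε := hrate
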